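/- For every integer q ≥ 3, there exists a 5-coloring ψ of the 3-element subsets of a (16q)-element vertex set with colors {1, 2, 3, 4, 5} such that: there is no 5-element vertex set all but at most one of whose 3-element subsets receive color 1; there is no 5-element vertex set all of whose 3-element subsets receive color 2; there is no 5-element vertex set all of whose 3-element subsets receive color 3; there is no 5-element vertex set all of whose 3-element subsets receive color 4; and there is no (q+1)-element vertex set all but at most one of whose 3-element subsets receive color 5. Consequently, R(K_5^{(3)} − e, K_5^{(3)}, K_5^{(3)}, K_5^{(3)}, K_{q+1}^{(3)} − e; 3) > 16q. -/

import Mathlib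

/-!
Split the `16q` vertices into 16 blocks of `q` and fix a 3-colouring of `K₁₆` without a
monochromatic triangle. A triple inside one block gets the last colour; any other triple gets the
colour of the edge joining its two lowest blocks. The first colour is never used, so it contains no
`K₅⁽³⁾ - e`. A `(q+1)`-set meets two blocks, and the `q - 1 ≥ 2` triples through a cross pair avoid
the last colour. A monochromatic `K₅⁽³⁾` in a middle colour has at most two vertices per block, so
it meets three blocks `a < b < c`, and each of `ab`, `bc`, `ac` is the lowest pair of one of its
triples: a monochromatic triangle of `K₁₆`. Finiteness of the Ramsey number is Ramsey's theorem,
proved by induction on the uniformity through end-homogeneous sets.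
-/

/-- The coloring `χ` of subsets of a `p`-element vertex set contains a
monochromatic complete `r`-uniform `K_m^{(r)}` in color `i`: an `m`-element
vertex set all of whose `r`-element subsets receive color `i`. -/
def HasMonoClique {C : Type} (p : ℕ) (χ : Finset (Fin p) → C) (r : ℕ)
    (i : C) (m : ℕ) : Prop :=
  ∃ S : Finset (Fin p), S.card = m ∧
    ∀ e : Finset (Fin p), e ⊆ S → e.card = r → χ e = i

/-- The coloring `ψ` of 3-element subsets contains a copy of `K_m^{(3)} - e` in
color `i`: an `m`-element vertex set all but at most one of whose 3-element
subsets receive color `i`. -/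
def HasCliqueMinusEdge {C : Type} [DecidableEq C] (p : ℕ)
    (ψ : Finset (Fin p) → C) (i : C) (m : ℕ) : Prop :=
  ∃ S : Finset (Fin p), S.card = m ∧
    ((S.powersetCard 3).filter (fun e => ψ e ≠ i)).card ≤ 1

/-- The 5-color hypergraph Ramsey number
`R(K_5^{(3)} - e, K_5^{(3)}, K_5^{(3)}, K_5^{(3)}, K_{q+1}^{(3)} - e; 3)`. -/
noncomputable def RHyp5 (q : ℕ) : ℕ :=
  sInf {p | 0 < p ∧ ∀ ψ : Finset (Fin p) → Fin 5,
    HasCliqueMinusEdge p ψ 0 5 ∨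
      HasMonoClique p ψ 3 1 5 ∨
        HasMonoClique p ψ 3 2 5 ∨
          HasMonoClique p ψ 3 3 5 ∨
            HasCliqueMinusEdge p ψ 4 (q + 1)}

open Finset

universe u v

section Cliques

variable {C : Type} {p : ℕ}

theorem HasMonoClique.of_comp_map {p' r m : ℕ} {χ : Finset (Fin p') → C} {i : C}
    (f : Fin p ↪ Fin p') (h : HasMonoClique p (fun e => χ (e.map f)) r i m) :
    HasMonoClique p' χ r i m := by
  obtain ⟨S, hS, hmono⟩ := h
  refine ⟨S.map f, by rw [card_map, hS], fun e he her => ?_⟩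
  obtain ⟨e, he, rfl⟩ := subset_map_iff.mp he
  exact hmono e (map_subset_map.mp he) (by rwa [card_map] at her)

theorem HasCliqueMinusEdge.of_comp_map [DecidableEq C] {p' m : ℕ} {ψ : Finset (Fin p') → C}
    {i : C} (f : Fin p ↪ Fin p') (h : HasCliqueMinusEdge p (fun e => ψ (e.map f)) i m) :
    HasCliqueMinusEdge p' ψ i m := by
  obtain ⟨S, hS, hfew⟩ := h
  refine ⟨S.map f, by rw [card_map, hS], ?_⟩
  rwa [powersetCard_map, filter_map, card_map]

theorem hasMonoClique_of_subset {r m : ℕ} {χ : Finset (Fin p) → C} {i : C} {Y : Finset (Fin p)}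
    (hm : m ≤ #Y) (hY : ∀ e ⊆ Y, #e = r → χ e = i) : HasMonoClique p χ r i m := by
  obtain ⟨S, hSY, hS⟩ := exists_subset_card_eq hm
  exact ⟨S, hS, fun e he => hY e (he.trans hSY)⟩

theorem HasMonoClique.hasCliqueMinusEdge [DecidableEq C] {m : ℕ} {ψ : Finset (Fin p) → C}
    {i : C} (h : HasMonoClique p ψ 3 i m) : HasCliqueMinusEdge p ψ i m := by
  obtain ⟨S, hS, hmono⟩ := h
  refine ⟨S, hS, ?_⟩
  rw [filter_false_of_mem fun e he => not_not.mpr (hmono e (mem_powersetCard.mp he).1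
    (mem_powersetCard.mp he).2), card_empty]
  exact zero_le_one

theorem not_hasCliqueMinusEdge_of_forall_ne [DecidableEq C] {m : ℕ} {ψ : Finset (Fin p) → C}
    {i : C} (hψ : ∀ e, ψ e ≠ i) (hm : 4 ≤ m) : ¬ HasCliqueMinusEdge p ψ i m := by
  rintro ⟨S, hS, hfew⟩
  rw [filter_true_of_mem fun e _ => hψ e, card_powersetCard, hS] at hfew
  have : 4 ≤ m.choose 3 := Nat.choose_le_choose 3 hm
  omega

end Cliques

section Ramsey

def IsRamseyBound (α : Type u) (C : Type v) (r m N : ℕ) : Prop :=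
  ∀ (χ : Finset α → C) (X : Finset α), N ≤ #X →
    ∃ Y ⊆ X, #Y = m ∧ ∃ c, ∀ e ⊆ Y, #e = r → χ e = c

def IsEndHomogeneousBound (α : Type u) [LinearOrder α] (C : Type v) (r L N : ℕ) : Prop :=
  ∀ (χ : Finset α → C) (X : Finset α), N ≤ #X →
    ∃ Y ⊆ X, #Y = L ∧ ∃ c : α → C,
      ∀ y ∈ Y, ∀ e ⊆ Y.filter (y < ·), #e = r → χ (insert y e) = c y

variable {C : Type v}

theorem isRamseyBound_zero (α : Type u) (m : ℕ) : IsRamseyBound α C 0 m m := by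
  intro χ X hX
  obtain ⟨Y, hYX, hY⟩ := exists_subset_card_eq hX
  exact ⟨Y, hYX, hY, χ ∅, fun e _ he => by rw [card_eq_zero.mp he]⟩

/-- Peel off the least point `a`, and pass to a large set on which `insert a` has constant
colour. -/
theorem exists_isEndHomogeneousBound {r : ℕ}
    (hr : ∀ m, ∃ N, ∀ (α : Type u) [LinearOrder α], IsRamseyBound α C r m N) (L : ℕ) :
    ∃ N, ∀ (α : Type u) [LinearOrder α], IsEndHomogeneousBound α C r L N := by
  induction L with
  | zero => exact ⟨0, fun α _ χ X _ => ⟨∅, empty_subset X, rfl, fun _ => χ ∅, by simp⟩⟩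
  | succ L ih =>
    obtain ⟨NL, hNL⟩ := ih
    obtain ⟨N, hN⟩ := hr NL
    refine ⟨N + 1, fun α _ χ X hX => ?_⟩
    have hne : X.Nonempty := card_pos.mp (by omega)
    set a := X.min' hne
    have ha : a ∈ X := min'_mem X hne
    obtain ⟨Z, hZX, hZ, col, hcol⟩ :=
      hN α (fun e => χ (insert a e)) (X.erase a) (by rw [card_erase_of_mem ha]; omega)
    obtain ⟨Y, hYZ, hY, c, hc⟩ := hNL α χ Z hZ.ge
    have hYX : Y ⊆ X.erase a := hYZ.trans hZX
    have haY : a ∉ Y := fun h => (mem_erase.mp (hYX h)).1 rfl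
    refine ⟨insert a Y, insert_subset ha (hYX.trans (erase_subset a X)),
      by rw [card_insert_of_notMem haY, hY], Function.update c a col, ?_⟩
    intro y hy e he hecard
    rcases mem_insert.mp hy with rfl | hyY
    · rw [Function.update_self]
      refine hcol e (fun x hx => hYZ ?_) hecard
      obtain ⟨hx, hax⟩ := mem_filter.mp (he hx)
      exact (mem_insert.mp hx).resolve_left hax.ne'
    · have hay : a < y := min'_lt_of_mem_erase_min' X hne (hYX hyY)
      rw [Function.update_of_ne hay.ne']
      refine hc y hyY e (fun x hx => ?_) hecard
      obtain ⟨hx, hyx⟩ := mem_filter.mp (he hx)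
      exact mem_filter.mpr ⟨(mem_insert.mp hx).resolve_left (hay.trans hyx).ne', hyx⟩

/-- Pigeonhole on the colours of the least points. -/
theorem IsEndHomogeneousBound.isRamseyBound_succ [Fintype C] {α : Type u} [LinearOrder α]
    {r m N : ℕ} (hN : IsEndHomogeneousBound α C r (Fintype.card C * m) N) :
    IsRamseyBound α C (r + 1) m N := by
  classical
  intro χ X hX
  obtain ⟨Y, hYX, hY, c, hc⟩ := hN χ X hX
  have : Nonempty C := ⟨χ ∅⟩
  obtain ⟨col, -, hcol⟩ := exists_le_card_fiber_of_mul_le_card_of_maps_to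
    (fun y _ => mem_univ (c y)) univ_nonempty (by rw [card_univ, hY])
  obtain ⟨W, hWY, hW⟩ := exists_subset_card_eq hcol
  refine ⟨W, hWY.trans (filter_subset _ Y) |>.trans hYX, hW, col, fun e heW hecard => ?_⟩
  have hne : e.Nonempty := card_pos.mp (by omega)
  set y := e.min' hne
  have hy : y ∈ e := min'_mem e hne
  obtain ⟨hyY, hcy⟩ := mem_filter.mp (hWY (heW hy))
  rw [← insert_erase hy, ← hcy]
  refine hc y hyY (e.erase y) (fun x hx => mem_filter.mpr ⟨?_, ?_⟩) ?_
  · exact (mem_filter.mp (hWY (heW (mem_of_mem_erase hx)))).1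
  · exact min'_lt_of_mem_erase_min' e hne hx
  · rw [card_erase_of_mem hy, hecard]; rfl

theorem exists_isRamseyBound [Fintype C] (r m : ℕ) :
    ∃ N, ∀ (α : Type u) [LinearOrder α], IsRamseyBound α C r m N := by
  induction r generalizing m with
  | zero => exact ⟨m, fun α _ => isRamseyBound_zero α m⟩
  | succ r ih =>
    obtain ⟨N, hN⟩ := exists_isEndHomogeneousBound ih (Fintype.card C * m)
    exact ⟨N, fun α _ => (hN α).isRamseyBound_succ⟩

end Ramsey

theorem exists_forall_rHyp5 (q : ℕ) : ∃ p, 0 < p ∧ ∀ ψ : Finset (Fin p) → Fin 5,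
    HasCliqueMinusEdge p ψ 0 5 ∨ HasMonoClique p ψ 3 1 5 ∨ HasMonoClique p ψ 3 2 5 ∨
      HasMonoClique p ψ 3 3 5 ∨ HasCliqueMinusEdge p ψ 4 (q + 1) := by
  obtain ⟨N, hN⟩ := exists_isRamseyBound (C := Fin 5) 3 (max 5 (q + 1))
  refine ⟨N + 1, N.succ_pos, fun ψ => ?_⟩
  obtain ⟨Y, -, hY, c, hc⟩ := hN (Fin (N + 1)) ψ univ (by simp)
  have h5 : HasMonoClique (N + 1) ψ 3 c 5 := hasMonoClique_of_subset (by omega) hc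
  fin_cases c
  · exact Or.inl h5.hasCliqueMinusEdge
  · exact Or.inr (Or.inl h5)
  · exact Or.inr (Or.inr (Or.inl h5))
  · exact Or.inr (Or.inr (Or.inr (Or.inl h5)))
  · exact Or.inr (Or.inr (Or.inr (Or.inr
      (hasMonoClique_of_subset (by omega) hc).hasCliqueMinusEdge)))

theorem lt_rHyp5 {q p : ℕ} (ψ : Finset (Fin p) → Fin 5) (h₀ : ¬ HasCliqueMinusEdge p ψ 0 5)
    (h₁ : ¬ HasMonoClique p ψ 3 1 5) (h₂ : ¬ HasMonoClique p ψ 3 2 5)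
    (h₃ : ¬ HasMonoClique p ψ 3 3 5) (h₄ : ¬ HasCliqueMinusEdge p ψ 4 (q + 1)) :
    p < RHyp5 q := by
  obtain ⟨P, hP⟩ := exists_forall_rHyp5 q
  by_contra! hle
  obtain ⟨-, hforces⟩ : RHyp5 q ∈ _ := Nat.sInf_mem ⟨P, hP⟩
  rcases hforces fun e => ψ (e.map (Fin.castLEEmb hle)) with h | h | h | h | h
  · exact h₀ (h.of_comp_map _)
  · exact h₁ (h.of_comp_map _)
  · exact h₂ (h.of_comp_map _)
  · exact h₃ (h.of_comp_map _)
  · exact h₄ (h.of_comp_map _)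

def NoMonoTriangle {n : ℕ} {C : Type*} (ec : Fin n → Fin n → C) : Prop :=
  ∀ a b c : Fin n, a < b → b < c → ¬ (ec a b = ec a c ∧ ec b c = ec a c)

/-- The Greenwood–Gleason colouring: the fifteen nonzero vectors of `𝔽₂⁴` (bitwise xor on
`Fin 16`) split into three sum-free classes, and a pair is coloured by the class of its xor; a
monochromatic triangle `a, b, c` would put `a ^^^ b`, `b ^^^ c` and their xor `a ^^^ c` into one
class. The entry at `0` is never used. -/
def greenwoodGleason (a b : Fin 16) : Fin 3 :=
  ![0, 0, 1, 1, 2, 2, 2, 1, 0, 2, 0, 1, 0, 1, 2, 0] (a ^^^ b)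

theorem noMonoTriangle_greenwoodGleason : NoMonoTriangle greenwoodGleason := by
  unfold NoMonoTriangle
  decide

theorem Finset.exists_three_least {α : Type*} [LinearOrder α] {T : Finset α} (hT : 3 ≤ #T) :
    ∃ a ∈ T, ∃ b ∈ T, ∃ c ∈ T, a < b ∧ b < c ∧ ∀ x ∈ T, x = a ∨ x = b ∨ c ≤ x := by
  set f := T.orderEmbOfFin rfl
  refine ⟨f ⟨0, by omega⟩, orderEmbOfFin_mem T rfl _, f ⟨1, by omega⟩, orderEmbOfFin_mem T rfl _,
    f ⟨2, by omega⟩, orderEmbOfFin_mem T rfl _, f.strictMono (by simp [Fin.lt_def]),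
    f.strictMono (by simp [Fin.lt_def]), fun x hx => ?_⟩
  obtain ⟨i, rfl⟩ : x ∈ Set.range f := by rw [range_orderEmbOfFin]; exact hx
  rcases i with ⟨_ | _ | i, hi⟩
  · exact Or.inl rfl
  · exact Or.inr (Or.inl rfl)
  · exact Or.inr (Or.inr (f.monotone (by simp [Fin.le_def])))

section Blowup

variable {n q : ℕ}

theorem Fin.card_le_of_forall_divNat_eq {S : Finset (Fin (n * q))}
    (hS : ∀ u ∈ S, ∀ v ∈ S, u.divNat = v.divNat) : #S ≤ q := by
  have hinj : Set.InjOn Fin.modNat (S : Set (Fin (n * q))) := fun u hu v hv huv =>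
    finProdFinEquiv.symm.injective (Prod.ext (hS u hu v hv) huv)
  simpa using card_le_card_of_injOn Fin.modNat (fun _ _ => mem_coe.mpr (mem_univ _)) hinj

variable (ec : Fin n → Fin n → Fin 3)

/-- The blocks are the fibres of `Fin.divNat`, i.e. `v ↦ v / q`; `j.castSucc.succ` is colour
`j + 1`. -/
def blowupColoring (e : Finset (Fin (n * q))) : Fin 5 :=
  let T := e.image Fin.divNat
  if h : T.Nonempty then
    if h' : (T.erase (T.min' h)).Nonempty then
      (ec (T.min' h) ((T.erase (T.min' h)).min' h')).castSucc.succ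
    else 4
  else 4

variable {ec}

theorem blowupColoring_ne_zero (e : Finset (Fin (n * q))) : blowupColoring ec e ≠ 0 := by
  unfold blowupColoring
  dsimp only
  split_ifs <;> simp [Fin.succ_ne_zero]

theorem blowupColoring_eq_four_iff {e : Finset (Fin (n * q))} :
    blowupColoring ec e = 4 ↔ ∀ u ∈ e, ∀ v ∈ e, u.divNat = v.divNat := by
  unfold blowupColoring
  dsimp only
  set T := e.image Fin.divNat
  split_ifs with h h'
  · refine iff_of_false (by simp [Fin.ext_iff]; omega) fun hT => ?_
    obtain ⟨x, hx⟩ := h'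
    obtain ⟨hxm, hxT⟩ := mem_erase.mp hx
    obtain ⟨u, hu, rfl⟩ := mem_image.mp hxT
    obtain ⟨v, hv, hvm⟩ := mem_image.mp (T.min'_mem h)
    exact hxm (hvm ▸ hT u hu v hv)
  · refine iff_of_true rfl fun u hu v hv => ?_
    have hmin : ∀ x ∈ T, x = T.min' h := fun x hx =>
      by_contra fun hxm => h' ⟨x, mem_erase.mpr ⟨hxm, hx⟩⟩
    rw [hmin _ (mem_image_of_mem _ hu), hmin _ (mem_image_of_mem _ hv)]
  · exact iff_of_true rfl fun u hu => absurd ⟨_, mem_image_of_mem _ hu⟩ h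

theorem blowupColoring_triple {u v w : Fin (n * q)} (huv : u.divNat < v.divNat)
    (hu : u.divNat ≤ w.divNat) (hv : w.divNat ≠ u.divNat → v.divNat ≤ w.divNat) :
    blowupColoring ec {u, v, w} = (ec u.divNat v.divNat).castSucc.succ := by
  unfold blowupColoring
  dsimp only
  set T := image Fin.divNat {u, v, w}
  have hmem : ∀ x, x ∈ T ↔ x = u.divNat ∨ x = v.divNat ∨ x = w.divNat := by simp [T]
  have hvT : v.divNat ∈ T := (hmem _).mpr (Or.inr (Or.inl rfl))
  have hne : T.Nonempty := ⟨v.divNat, hvT⟩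
  have hmin : T.min' hne = u.divNat := (min'_eq_iff _ _ _).mpr ⟨(hmem _).mpr (Or.inl rfl),
    fun x hx => by rcases (hmem x).mp hx with rfl | rfl | rfl <;> order⟩
  have hvT' : v.divNat ∈ T.erase (T.min' hne) := mem_erase.mpr ⟨hmin ▸ huv.ne', hvT⟩
  have hmin' : (T.erase (T.min' hne)).min' ⟨_, hvT'⟩ = v.divNat := by
    refine (min'_eq_iff _ _ _).mpr ⟨hvT', fun x hx => ?_⟩
    rw [mem_erase, hmin] at hx
    rcases (hmem x).mp hx.2 with rfl | rfl | rfl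
    exacts [absurd rfl hx.1, le_rfl, hv hx.1]
  rw [dif_pos hne, dif_pos ⟨_, hvT'⟩, hmin', hmin]

theorem not_hasCliqueMinusEdge_four (hq : 3 ≤ q) :
    ¬ HasCliqueMinusEdge (n * q) (blowupColoring ec) 4 (q + 1) := by
  rintro ⟨S, hS, hfew⟩
  obtain ⟨u, hu, v, hv, huv⟩ : ∃ u ∈ S, ∃ v ∈ S, u.divNat ≠ v.divNat := by
    by_contra! h
    have := Fin.card_le_of_forall_divNat_eq h
    omega
  have hrest : 2 ≤ #(S \ {u, v}) := by
    rw [card_sdiff_of_subset (by simp [insert_subset_iff, hu, hv])]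
    have := card_le_two (a := u) (b := v)
    omega
  have hmaps : Set.MapsTo (fun w => ({u, v, w} : Finset (Fin (n * q)))) ↑(S \ {u, v})
      ↑((S.powersetCard 3).filter fun e => blowupColoring ec e ≠ 4) := by
    intro w hw
    obtain ⟨hwS, hwuv⟩ := mem_sdiff.mp hw
    simp only [mem_insert, mem_singleton, not_or] at hwuv
    simp only [coe_filter, Set.mem_ofPred_eq, mem_powersetCard, ne_eq,
      blowupColoring_eq_four_iff]
    refine ⟨⟨by simp [insert_subset_iff, hu, hv, hwS],
      card_eq_three.mpr ⟨u, v, w, ?_, ?_, ?_, rfl⟩⟩, fun h => huv (h u (by simp) v (by simp))⟩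
    all_goals grind
  have hinj : Set.InjOn (fun w => ({u, v, w} : Finset (Fin (n * q)))) ↑(S \ {u, v}) := by
    intro w hw w' hw' h
    have : w ∈ ({u, v, w'} : Finset _) :=
      (show ({u, v, w} : Finset _) = {u, v, w'} from h) ▸ by simp
    simp only [coe_sdiff, Set.mem_sdiff, mem_coe, mem_insert, mem_singleton] at hw this
    grind
  have := card_le_card_of_injOn _ hmaps hinj
  omega

theorem card_filter_divNat_le_two {S : Finset (Fin (n * q))}
    (hS : ∀ e ⊆ S, #e = 3 → blowupColoring ec e ≠ 4) (t : Fin n) :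
    #(S.filter (·.divNat = t)) ≤ 2 := by
  by_contra! h
  obtain ⟨e, he, he3⟩ := exists_subset_card_eq h
  refine hS e (he.trans (filter_subset _ S)) he3 (blowupColoring_eq_four_iff.mpr ?_)
  intro u hu v hv
  rw [(mem_filter.mp (he hu)).2, (mem_filter.mp (he hv)).2]

theorem exists_mem_divNat_ne {S : Finset (Fin (n * q))}
    (hS : ∀ e ⊆ S, #e = 3 → blowupColoring ec e ≠ 4) (hcard : #S = 5) (u v : Fin (n * q))
    (t : Fin n) : ∃ w ∈ S, w ≠ u ∧ w ≠ v ∧ w.divNat ≠ t := by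
  by_contra! h
  have hsub : S \ {u, v} ⊆ S.filter (·.divNat = t) := fun w hw => by
    simp only [mem_sdiff, mem_insert, mem_singleton, not_or] at hw
    exact mem_filter.mpr ⟨hw.1, h w hw.1 hw.2.1 hw.2.2⟩
  have := le_card_sdiff {u, v} S
  have := card_le_two (a := u) (b := v)
  have := card_le_card hsub
  have := card_filter_divNat_le_two hS t
  omega

theorem ec_eq_of_forall_blowupColoring_eq {S : Finset (Fin (n * q))} {j : Fin 3}
    (hS : ∀ e ⊆ S, #e = 3 → blowupColoring ec e = j.castSucc.succ) {u v w : Fin (n * q)}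
    (hu : u ∈ S) (hv : v ∈ S) (hw : w ∈ S) (hwu : w ≠ u) (hwv : w ≠ v)
    (huv : u.divNat < v.divNat) (huw : u.divNat ≤ w.divNat)
    (hvw : w.divNat ≠ u.divNat → v.divNat ≤ w.divNat) : ec u.divNat v.divNat = j := by
  have h := hS {u, v, w} (by simp [insert_subset_iff, hu, hv, hw])
    (card_eq_three.mpr ⟨u, v, w, fun h => huv.ne (congrArg _ h), hwu.symm, hwv.symm, rfl⟩)
  rw [blowupColoring_triple huv huw hvw] at h
  exact Fin.castSucc_injective _ (Fin.succ_injective _ h)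

theorem not_hasMonoClique_blowupColoring (hec : NoMonoTriangle ec) (j : Fin 3) :
    ¬ HasMonoClique (n * q) (blowupColoring ec) 3 j.castSucc.succ 5 := by
  rintro ⟨S, hS, hmono⟩
  have hne4 : ∀ e ⊆ S, #e = 3 → blowupColoring ec e ≠ 4 := fun e he he3 => by
    rw [hmono e he he3]; simp [Fin.ext_iff]; omega
  have hT : 3 ≤ #(S.image Fin.divNat) := by
    have := card_le_mul_card_image S 2 fun t _ => card_filter_divNat_le_two hne4 t
    omega
  obtain ⟨_, ha, _, hb, _, hc, hab, hbc, hleast⟩ := exists_three_least hT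
  obtain ⟨u₁, hu₁, rfl⟩ := mem_image.mp ha
  obtain ⟨u₂, hu₂, rfl⟩ := mem_image.mp hb
  obtain ⟨u₃, hu₃, rfl⟩ := mem_image.mp hc
  have hblock : ∀ w ∈ S,
      w.divNat = u₁.divNat ∨ w.divNat = u₂.divNat ∨ u₃.divNat ≤ w.divNat :=
    fun w hw => hleast w.divNat (mem_image_of_mem _ hw)
  -- For each pair of the three lowest blocks, a third vertex outside the block in between
  -- makes that pair the lowest pair of a triple.
  obtain ⟨w₁₂, hw₁₂, hw₁₂u, hw₁₂v, -⟩ := exists_mem_divNat_ne hne4 hS u₁ u₂ u₁.divNat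
  obtain ⟨w₂₃, hw₂₃, hw₂₃u, hw₂₃v, hw₂₃t⟩ := exists_mem_divNat_ne hne4 hS u₂ u₃ u₁.divNat
  obtain ⟨w₁₃, hw₁₃, hw₁₃u, hw₁₃v, hw₁₃t⟩ := exists_mem_divNat_ne hne4 hS u₁ u₃ u₂.divNat
  have h₁₂ := ec_eq_of_forall_blowupColoring_eq hmono hu₁ hu₂ hw₁₂ hw₁₂u hw₁₂v hab
    (by rcases hblock w₁₂ hw₁₂ with h | h | h <;> omega)
    (by rcases hblock w₁₂ hw₁₂ with h | h | h <;> omega)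
  have h₂₃ := ec_eq_of_forall_blowupColoring_eq hmono hu₂ hu₃ hw₂₃ hw₂₃u hw₂₃v hbc
    (by rcases hblock w₂₃ hw₂₃ with h | h | h <;> omega)
    (by rcases hblock w₂₃ hw₂₃ with h | h | h <;> omega)
  have h₁₃ := ec_eq_of_forall_blowupColoring_eq hmono hu₁ hu₃ hw₁₃ hw₁₃u hw₁₃v (hab.trans hbc)
    (by rcases hblock w₁₃ hw₁₃ with h | h | h <;> omega)
    (by rcases hblock w₁₃ hw₁₃ with h | h | h <;> omega)
  exact hec _ _ _ hab hbc ⟨h₁₂.trans h₁₃.symm, h₂₃.trans h₁₃.symm⟩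

end Blowup

/-- for `q ≥ 3` there is a 5-coloring of the triples of a
`16q`-element set avoiding `K_5^{(3)} - e` in color 1, monochromatic
`K_5^{(3)}` in colors 2, 3, 4, and `K_{q+1}^{(3)} - e` in color 5;
consequently
`R(K_5^{(3)}-e, K_5^{(3)}, K_5^{(3)}, K_5^{(3)}, K_{q+1}^{(3)}-e; 3) > 16q`. -/
theorem five_color_bound (q : ℕ) (hq : 3 ≤ q) :
    (∃ ψ : Finset (Fin (16 * q)) → Fin 5,
      ¬ HasCliqueMinusEdge (16 * q) ψ 0 5 ∧
      ¬ HasMonoClique (16 * q) ψ 3 1 5 ∧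
      ¬ HasMonoClique (16 * q) ψ 3 2 5 ∧
      ¬ HasMonoClique (16 * q) ψ 3 3 5 ∧
      ¬ HasCliqueMinusEdge (16 * q) ψ 4 (q + 1)) ∧
    16 * q < RHyp5 q := by
  set ψ := blowupColoring (q := q) greenwoodGleason
  have hec := noMonoTriangle_greenwoodGleason
  have h₀ : ¬ HasCliqueMinusEdge (16 * q) ψ 0 5 :=
    not_hasCliqueMinusEdge_of_forall_ne blowupColoring_ne_zero (by norm_num)
  have h₁ : ¬ HasMonoClique (16 * q) ψ 3 1 5 := not_hasMonoClique_blowupColoring hec 0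
  have h₂ : ¬ HasMonoClique (16 * q) ψ 3 2 5 := not_hasMonoClique_blowupColoring hec 1
  have h₃ : ¬ HasMonoClique (16 * q) ψ 3 3 5 := not_hasMonoClique_blowupColoring hec 2
  have h₄ : ¬ HasCliqueMinusEdge (16 * q) ψ 4 (q + 1) := not_hasCliqueMinusEdge_four hq
  exact ⟨⟨ψ, h₀, h₁, h₂, h₃, h₄⟩, lt_rHyp5 ψ h₀ h₁ h₂ h₃ h₄⟩
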